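/- Let f and f' be holomorphic functions on ℍ×ℂ and let m, m' be integers. Then for every Y ∈ ℤ²: ( m'(∂_z f)·f' − m·f·(∂_z f') )|_{m+m'} Y = m'(∂_z(f|_m Y))·(f'|_{m'} Y) − m·(f|_m Y)·(∂_z(f'|_{m'} Y)). -/

import Mathlib

open Complex Real Finset

noncomputable section

/-- The upper half plane, as a subset of `ℂ`. -/
def UHP : Set ℂ := {τ : ℂ | 0 < τ.im}

/-- Partial derivative with respect to the first variable `τ`. -/
def dTau (f : ℂ → ℂ → ℂ) : ℂ → ℂ → ℂ := fun τ z => deriv (fun w => f w z) τ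

/-- Partial derivative with respect to the second variable `z`. -/
def dZ (f : ℂ → ℂ → ℂ) : ℂ → ℂ → ℂ := fun τ z => deriv (fun w => f τ w) z

/-- The heat operator `L_m = 8πim ∂/∂τ − ∂²/∂z²`. -/
def heatOp (m : ℤ) (f : ℂ → ℂ → ℂ) : ℂ → ℂ → ℂ :=
  fun τ z => 8 * (π : ℂ) * I * (m : ℂ) * dTau f τ z - dZ (dZ f) τ z

/-- The weight `k`, index `m` slash action of `SL(2,ℤ)` on functions `ℍ × ℂ → ℂ`. -/
def jacobiSlash (k m : ℤ) (M : Matrix.SpecialLinearGroup (Fin 2) ℤ) (f : ℂ → ℂ → ℂ) :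
    ℂ → ℂ → ℂ := fun τ z =>
  ((M.1 1 0 : ℂ) * τ + (M.1 1 1 : ℂ)) ^ (-k) *
    Complex.exp (2 * (π : ℂ) * I * (m : ℂ) *
      (-((M.1 1 0 : ℂ) * z ^ 2) / ((M.1 1 0 : ℂ) * τ + (M.1 1 1 : ℂ)))) *
    f (((M.1 0 0 : ℂ) * τ + (M.1 0 1 : ℂ)) / ((M.1 1 0 : ℂ) * τ + (M.1 1 1 : ℂ)))
      (z / ((M.1 1 0 : ℂ) * τ + (M.1 1 1 : ℂ)))

/-- The index `m` action of the lattice `ℤ²` on functions `ℍ × ℂ → ℂ`. -/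
def latticeSlash (m : ℤ) (Y : ℤ × ℤ) (f : ℂ → ℂ → ℂ) : ℂ → ℂ → ℂ := fun τ z =>
  Complex.exp (2 * (π : ℂ) * I * (m : ℂ) * ((Y.1 : ℂ) ^ 2 * τ + 2 * (Y.1 : ℂ) * z)) *
    f τ (z + (Y.1 : ℂ) * τ + (Y.2 : ℂ))

/-- A Jacobi form of weight `k` and index `m`: a holomorphic function on `ℍ × ℂ`,
invariant under both slash actions, with a Fourier expansion supported on
`n ≥ 0`, `r² ≤ 4nm`. -/
structure IsJacobiForm (k m : ℤ) (f : ℂ → ℂ → ℂ) : Prop where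
  holo : DifferentiableOn ℂ (fun p : ℂ × ℂ => f p.1 p.2) {p : ℂ × ℂ | 0 < p.1.im}
  slash_invariant : ∀ M : Matrix.SpecialLinearGroup (Fin 2) ℤ, ∀ τ ∈ UHP, ∀ z : ℂ,
    jacobiSlash k m M f τ z = f τ z
  lattice_invariant : ∀ Y : ℤ × ℤ, ∀ τ ∈ UHP, ∀ z : ℂ,
    latticeSlash m Y f τ z = f τ z
  fourier : ∃ c : ℤ × ℤ → ℂ,
    (∀ n r : ℤ, (n < 0 ∨ 4 * n * m < r ^ 2) → c (n, r) = 0) ∧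
    ∀ τ ∈ UHP, ∀ z : ℂ,
      f τ z = ∑' nr : ℤ × ℤ, c nr *
        Complex.exp (2 * (π : ℂ) * I * ((nr.1 : ℂ) * τ + (nr.2 : ℂ) * z))

/-- The falling factorial `(x)_n = x(x−1)⋯(x−n+1)`. -/
def ffall (x : ℂ) (n : ℕ) : ℂ := ∏ i ∈ Finset.range n, (x - (i : ℂ))

/-- The combinatorial coefficients `C_{r,s,p}` appearing in the Rankin-Cohen brackets. -/
def Ccoef (α β γ : ℂ) (r s p : ℕ) : ℂ :=
  ffall (α + r + s + p) (s + p) / (r.factorial : ℂ) *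
    (ffall (β + r + s + p) (r + p) / (s.factorial : ℂ)) *
    (ffall (-(γ + (r : ℂ) + s + p)) (r + s) / (p.factorial : ℂ))

/-- The Rankin-Cohen bracket `[f,f']_{X,v}` of two Jacobi forms. -/
def jacobiRC (k k' m m' : ℤ) (X : ℂ) (v : ℕ) (f f' : ℂ → ℂ → ℂ) : ℂ → ℂ → ℂ :=
  fun τ z =>
    ∑ r ∈ Finset.range (v / 2 + 1), ∑ s ∈ Finset.range (v / 2 + 1 - r),
      ∑ i ∈ Finset.range (v % 2 + 1),
        Ccoef ((k : ℂ) - 3/2) ((k' : ℂ) - 3/2) ((k : ℂ) + (k' : ℂ) - 3/2 + ((v % 2 : ℕ) : ℂ))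
            r s (v / 2 - r - s) *
          ((m : ℂ) ^ (v % 2 - i) * (-(m' : ℂ)) ^ i * (1 + (m : ℂ) * X) ^ s *
            (1 - (m' : ℂ) * X) ^ r) *
          (heatOp (m + m'))^[v / 2 - r - s]
            (fun τ' z' =>
              (heatOp m)^[r] (dZ^[i] f) τ' z' * (heatOp m')^[s] (dZ^[v % 2 - i] f') τ' z') τ z

def latticeFactor (m : ℤ) (Y : ℤ × ℤ) (τ z : ℂ) : ℂ :=
  Complex.exp (2 * (π : ℂ) * I * (m : ℂ) * ((Y.1 : ℂ) ^ 2 * τ + 2 * (Y.1 : ℂ) * z))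

section LatticeSlash

variable (m : ℤ) (Y : ℤ × ℤ) (τ z : ℂ)

lemma latticeSlash_apply (g : ℂ → ℂ → ℂ) :
    latticeSlash m Y g τ z = latticeFactor m Y τ z * g τ (z + (Y.1 : ℂ) * τ + (Y.2 : ℂ)) :=
  rfl

lemma latticeFactor_add (m' : ℤ) :
    latticeFactor (m + m') Y τ z = latticeFactor m Y τ z * latticeFactor m' Y τ z := by
  rw [latticeFactor, latticeFactor, latticeFactor, ← Complex.exp_add]
  congr 1
  push_cast
  ring

lemma hasDerivAt_latticeFactor :
    HasDerivAt (latticeFactor m Y τ) (latticeFactor m Y τ z * (4 * π * I * m * Y.1)) z := by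
  have hexponent : HasDerivAt
      (fun w : ℂ => 2 * (π : ℂ) * I * (m : ℂ) * ((Y.1 : ℂ) ^ 2 * τ + 2 * (Y.1 : ℂ) * w))
      (2 * (π : ℂ) * I * (m : ℂ) * (2 * (Y.1 : ℂ))) z := by
    simpa using (((hasDerivAt_id z).const_mul (2 * (Y.1 : ℂ))).const_add
      ((Y.1 : ℂ) ^ 2 * τ)).const_mul (2 * (π : ℂ) * I * (m : ℂ))
  exact hexponent.cexp.congr_deriv (by rw [latticeFactor]; ring)

lemma dZ_latticeSlash {g : ℂ → ℂ → ℂ}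
    (hg : DifferentiableAt ℂ (g τ) (z + (Y.1 : ℂ) * τ + (Y.2 : ℂ))) :
    dZ (latticeSlash m Y g) τ z = latticeFactor m Y τ z *
      (4 * π * I * m * Y.1 * g τ (z + (Y.1 : ℂ) * τ + (Y.2 : ℂ)) +
        dZ g τ (z + (Y.1 : ℂ) * τ + (Y.2 : ℂ))) := by
  have hshift : HasDerivAt (fun w => g τ (w + (Y.1 : ℂ) * τ + (Y.2 : ℂ)))
      (dZ g τ (z + (Y.1 : ℂ) * τ + (Y.2 : ℂ))) z :=
    (hg.hasDerivAt.comp z (((hasDerivAt_id' z).add_const ((Y.1 : ℂ) * τ)).add_const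
      (Y.2 : ℂ))).congr_deriv (mul_one _)
  exact ((hasDerivAt_latticeFactor m Y τ z).mul hshift).deriv.trans (by ring)

end LatticeSlash

lemma differentiableAt_slice_of_differentiableOn_upperHalf {g : ℂ → ℂ → ℂ}
    (hg : DifferentiableOn ℂ (fun p : ℂ × ℂ => g p.1 p.2) {p : ℂ × ℂ | 0 < p.1.im})
    {τ : ℂ} (hτ : 0 < τ.im) (w : ℂ) : DifferentiableAt ℂ (g τ) w := by
  have hopen : IsOpen {p : ℂ × ℂ | 0 < p.1.im} :=
    isOpen_lt continuous_const (Complex.continuous_im.comp continuous_fst)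
  exact (hg.differentiableAt (hopen.mem_nhds hτ)).comp w
    ((differentiableAt_const τ).prodMk differentiableAt_id)

/-- **Covariance of the first-order bracket under the lattice action**
(Lemma 3 of Choie-Eholzer): for `f`, `f'` holomorphic on `ℍ × ℂ` and any `Y ∈ ℤ²`,
`(m'(∂_z f) f' − m f (∂_z f'))|_{m+m'} Y
  = m'(∂_z(f|_m Y))(f'|_{m'} Y) − m (f|_m Y)(∂_z(f'|_{m'} Y))`. -/
theorem odd_bracket_latticeSlash (f f' : ℂ → ℂ → ℂ)
    (hf : DifferentiableOn ℂ (fun p : ℂ × ℂ => f p.1 p.2) {p : ℂ × ℂ | 0 < p.1.im})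
    (hf' : DifferentiableOn ℂ (fun p : ℂ × ℂ => f' p.1 p.2) {p : ℂ × ℂ | 0 < p.1.im})
    (m m' : ℤ) (Y : ℤ × ℤ) (τ : ℂ) (hτ : τ ∈ UHP) (z : ℂ) :
    latticeSlash (m + m') Y
        (fun τ' z' => (m' : ℂ) * dZ f τ' z' * f' τ' z' - (m : ℂ) * f τ' z' * dZ f' τ' z')
        τ z =
      (m' : ℂ) * dZ (latticeSlash m Y f) τ z * latticeSlash m' Y f' τ z -
        (m : ℂ) * latticeSlash m Y f τ z * dZ (latticeSlash m' Y f') τ z := by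
  rw [dZ_latticeSlash m Y τ z (differentiableAt_slice_of_differentiableOn_upperHalf hf hτ _),
    dZ_latticeSlash m' Y τ z (differentiableAt_slice_of_differentiableOn_upperHalf hf' hτ _),
    latticeSlash_apply, latticeSlash_apply, latticeSlash_apply, latticeFactor_add]
  -- the terms `4πiλ m m' f f'` coming from the two automorphy factors cancel
  ring

end
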